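/- Let p be a prime with p ≡ 1 (mod 4), let z₀ = cos θ + i sin θ where cos θ = (√p − 1)/(p − 1) and sin θ = √(1 − cos²θ) ≥ 0, and let v ∈ ℂ^p be defined by v₀ = 1, v_m = z₀ for m ∈ Q*, and v_m = conj(z₀) for m ∈ N. Then the p vectors (1/√p)·v^(k), k = 0,…,p−1, form an orthonormal basis of ℂ^p that is mutually unbiased to the standard basis of ℂ^p and mutually unbiased to the Fourier basis of ℂ^p. -/

import Mathlib

open scoped ComplexInnerProductSpace Classical

/-- `ω p = exp(2πi/p)`, a primitive `p`-th root of unity. -/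
noncomputable def omegaRoot (p : ℕ) : ℂ := Complex.exp (2 * Real.pi * Complex.I / p)

/-- The `j`-th Fourier basis vector of `ℂ^p`, with components `ω_p^{jm}/√p`. -/
noncomputable def fourierVec (p : ℕ) (j : Fin p) : EuclideanSpace ℂ (Fin p) :=
  WithLp.toLp 2 (fun m => omegaRoot p ^ ((j : ℕ) * (m : ℕ)) / (Real.sqrt p : ℂ))

/-- The cyclic shift `v^(k)` of `v`, with components `(v^(k))_{(m+k) mod p} = v_m`. -/
def cyclicShift {p : ℕ} (k : Fin p) (v : EuclideanSpace ℂ (Fin p)) :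
    EuclideanSpace ℂ (Fin p) :=
  WithLp.toLp 2 (fun n => v (n - k))

/-- The nonzero quadratic residues modulo `p`, viewed inside `{1, …, p-1}`:
`m ∈ Q*` iff `m ≢ 0 (mod p)` and `m ≡ x² (mod p)` for some integer `x`. -/
noncomputable def QresStar (p : ℕ) : Finset ℕ :=
  (Finset.range p).filter
    (fun m => ¬ ((p : ℤ) ∣ (m : ℤ)) ∧ ∃ x : ℤ, Int.ModEq (p : ℤ) (x ^ 2) (m : ℤ))

/-- `cos θ = (√p − 1)/(p − 1)`. -/
noncomputable def cosR (p : ℕ) : ℝ := (Real.sqrt p - 1) / ((p : ℝ) - 1)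

/-- `sin θ = √(1 − cos²θ) ≥ 0`. -/
noncomputable def sinR (p : ℕ) : ℝ := Real.sqrt (1 - cosR p ^ 2)

/-- `z₀ = cos θ + i sin θ`. -/
noncomputable def z0 (p : ℕ) : ℂ := (cosR p : ℂ) + (sinR p : ℂ) * Complex.I

/-- The vector `v ∈ ℂ^p`: `v₀ = 1`, `v_m = z₀` for `m ∈ Q*`, `v_m = conj z₀`
for `m ∈ N`. -/
noncomputable def vStar (p : ℕ) : EuclideanSpace ℂ (Fin p) :=
  WithLp.toLp 2 (fun m =>
    if (m : ℕ) = 0 then 1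
    else if (m : ℕ) ∈ QresStar p then z0 p else starRingEnd ℂ (z0 p))

/-!
Write `v = cos θ · 𝟙 + i sin θ · χ + (1 - cos θ) · δ₀` on `ZMod p`, with `χ` the quadratic
character. Its discrete Fourier transform is `p cos θ · δ₀ + i sin θ · χ(-k) g + (1 - cos θ)`,
where `g` is the quadratic Gauss sum; since `p ≡ 1 (mod 4)`, `(χ(-k) g)² = g² = p`, so
`χ(-k) g = ±√p` is real. Hence `v̂(0) = (p - 1) cos θ + 1 = √p` and
`v̂(k) = (1 - cos θ) ± i √p sin θ` for `k ≠ 0`, and `cos θ = 1 / (√p + 1)` is exactly what makes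
`|v̂(k)|² = p`. So `v / √p` is unbiased to the Fourier basis. A cyclic shift multiplies each
Fourier coefficient by a root of unity, so all shifts stay unbiased, and Parseval in the Fourier
basis turns the flat spectrum into orthonormality of the shifts. Unbiasedness to the standard
basis is `|v_m| = 1`.
-/

open ZMod Finset ComplexConjugate

noncomputable def Orthonormal.toEuclideanBasis {𝕜 ι : Type*} [RCLike 𝕜] [Fintype ι]
    {v : ι → EuclideanSpace 𝕜 ι} (hv : Orthonormal 𝕜 v) :
    OrthonormalBasis ι 𝕜 (EuclideanSpace 𝕜 ι) :=
  OrthonormalBasis.mk hv (hv.linearIndependent.span_eq_top_of_card_eq_finrank' (by simp)).ge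

@[simp] lemma Orthonormal.coe_toEuclideanBasis {𝕜 ι : Type*} [RCLike 𝕜] [Fintype ι]
    {v : ι → EuclideanSpace 𝕜 ι} (hv : Orthonormal 𝕜 v) : ⇑hv.toEuclideanBasis = v :=
  OrthonormalBasis.coe_mk _ _

lemma sq_norm_inv_sqrt_mul (N : ℕ) (z : ℂ) :
    ‖(Real.sqrt N : ℂ)⁻¹ * z‖ ^ 2 = ‖z‖ ^ 2 / N := by
  rw [norm_mul, norm_inv, Complex.norm_real, Real.norm_of_nonneg (Real.sqrt_nonneg _), mul_pow,
    inv_pow, Real.sq_sqrt (Nat.cast_nonneg _), inv_mul_eq_div]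

lemma ofReal_sqrt_mul_self (N : ℕ) : (Real.sqrt N : ℂ) * Real.sqrt N = N := by
  rw [← Complex.ofReal_mul, Real.mul_self_sqrt N.cast_nonneg, Complex.ofReal_natCast]

section CyclicShift
variable {N : ℕ}

lemma cyclicShift_smul (k : Fin N) (c : ℂ) (v : EuclideanSpace ℂ (Fin N)) :
    cyclicShift k (c • v) = c • cyclicShift k v :=
  rfl

lemma inner_single_cyclicShift (j k : Fin N) (v : EuclideanSpace ℂ (Fin N)) :
    ⟪EuclideanSpace.single j (1 : ℂ), cyclicShift k v⟫ = v (j - k) := by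
  rw [EuclideanSpace.inner_single_left, map_one, one_mul]
  rfl

end CyclicShift

section Fourier
variable {N : ℕ} [NeZero N]

lemma ZMod.finEquiv_apply (m : Fin N) : finEquiv N m = ((m : ℕ) : ZMod N) := by
  obtain ⟨n, rfl⟩ : ∃ n, N = n + 1 := Nat.exists_eq_succ_of_ne_zero (NeZero.ne N)
  exact (Fin.cast_val_eq_self m).symm

lemma omegaRoot_pow (n : ℕ) : omegaRoot N ^ n = stdAddChar (n : ZMod N) := by
  rw [omegaRoot, ← Complex.exp_nat_mul, ← Int.cast_natCast (R := ZMod N), stdAddChar_coe]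
  push_cast
  congr 1
  ring

lemma fourierVec_apply (j m : Fin N) :
    fourierVec N j m = stdAddChar (finEquiv N j * finEquiv N m) / Real.sqrt N := by
  simp [fourierVec, omegaRoot_pow, finEquiv_apply]

lemma fourierVec_apply_add (j m k : Fin N) :
    fourierVec N j (m + k) = stdAddChar (finEquiv N j * finEquiv N k) * fourierVec N j m := by
  simp only [fourierVec_apply, map_add, mul_add, AddChar.map_add_eq_mul]
  ring

lemma sum_stdAddChar_finEquiv_mul (c : ZMod N) :
    ∑ m : Fin N, stdAddChar (finEquiv N m * c) = if c = 0 then (N : ℂ) else 0 := by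
  calc ∑ m : Fin N, stdAddChar (finEquiv N m * c)
      = ∑ a : ZMod N, stdAddChar (a * c) :=
        Fintype.sum_equiv (finEquiv N).toEquiv _ _ fun _ => rfl
    _ = _ := by
        rw [AddChar.sum_mulShift c (isPrimitive_stdAddChar N), ZMod.card, Nat.cast_ite,
          Nat.cast_zero]

lemma orthonormal_fourierVec : Orthonormal ℂ (fourierVec N) := by
  rw [orthonormal_iff_ite]
  intro i j
  have h : ∀ m : Fin N, conj (fourierVec N i m) * fourierVec N j m =
      (N : ℂ)⁻¹ * stdAddChar (finEquiv N m * (finEquiv N j - finEquiv N i)) := fun m => by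
    rw [fourierVec_apply, fourierVec_apply, map_div₀, ← AddChar.map_neg_eq_conj,
      Complex.conj_ofReal, mul_comm (finEquiv N i), mul_comm (finEquiv N j), mul_sub,
      sub_eq_neg_add, AddChar.map_add_eq_mul, ← ofReal_sqrt_mul_self]
    ring
  simp only [PiLp.inner_apply, RCLike.inner_apply', h, ← mul_sum, sum_stdAddChar_finEquiv_mul,
    sub_eq_zero, (finEquiv N).injective.eq_iff, eq_comm (a := j)]
  split_ifs <;> simp [NeZero.ne]

noncomputable def fourierONB (N : ℕ) [NeZero N] :
    OrthonormalBasis (Fin N) ℂ (EuclideanSpace ℂ (Fin N)) :=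
  orthonormal_fourierVec.toEuclideanBasis

lemma fourierONB_apply (j : Fin N) : fourierONB N j = fourierVec N j := by
  simp [fourierONB]

lemma inner_fourierVec_eq_dft (j : Fin N) (v : EuclideanSpace ℂ (Fin N)) :
    ⟪fourierVec N j, v⟫ =
      (Real.sqrt N : ℂ)⁻¹ * 𝓕 (fun a => v ((finEquiv N).symm a)) (finEquiv N j) := by
  simp only [PiLp.inner_apply, RCLike.inner_apply', dft_apply, smul_eq_mul, mul_sum]
  refine Fintype.sum_equiv (finEquiv N).toEquiv _ _ fun m => ?_
  simp only [fourierVec_apply, map_div₀, Complex.conj_ofReal, ← AddChar.map_neg_eq_conj,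
    RingEquiv.toEquiv_eq_coe, EquivLike.coe_coe, RingEquiv.symm_apply_apply,
    mul_comm (finEquiv N m)]
  ring

lemma inner_fourierVec_cyclicShift (j k : Fin N) (v : EuclideanSpace ℂ (Fin N)) :
    ⟪fourierVec N j, cyclicShift k v⟫ =
      stdAddChar (-(finEquiv N j * finEquiv N k)) * ⟪fourierVec N j, v⟫ := by
  simp only [PiLp.inner_apply, RCLike.inner_apply', cyclicShift, mul_sum]
  refine Fintype.sum_equiv (Equiv.subRight k) _ _ fun m => ?_
  rw [Equiv.subRight_apply, ← mul_assoc]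
  congr 1
  conv_lhs => rw [← sub_add_cancel m k]
  rw [fourierVec_apply_add, map_mul, AddChar.map_neg_eq_conj]

lemma norm_inner_fourierVec_cyclicShift (j k : Fin N) (v : EuclideanSpace ℂ (Fin N)) :
    ‖⟪fourierVec N j, cyclicShift k v⟫‖ = ‖⟪fourierVec N j, v⟫‖ := by
  rw [inner_fourierVec_cyclicShift, norm_mul, AddChar.norm_apply, one_mul]

lemma orthonormal_cyclicShift {v : EuclideanSpace ℂ (Fin N)}
    (hv : ∀ j, ‖⟪fourierVec N j, v⟫‖ ^ 2 = 1 / N) :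
    Orthonormal ℂ (fun k => cyclicShift k v) := by
  rw [orthonormal_iff_ite]
  intro k l
  have h : ∀ j, ⟪cyclicShift k v, fourierONB N j⟫ * ⟪fourierONB N j, cyclicShift l v⟫ =
      (N : ℂ)⁻¹ * stdAddChar (finEquiv N j * (finEquiv N k - finEquiv N l)) := fun j => by
    rw [fourierONB_apply, ← inner_conj_symm, inner_fourierVec_cyclicShift,
      inner_fourierVec_cyclicShift, map_mul, ← AddChar.map_neg_eq_conj, mul_mul_mul_comm,
      ← AddChar.map_add_eq_mul, Complex.conj_mul', ← Complex.ofReal_pow, hv j, neg_neg,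
      ← sub_eq_add_neg, ← mul_sub]
    push_cast
    ring
  rw [← (fourierONB N).sum_inner_mul_inner]
  simp only [h, ← mul_sum, sum_stdAddChar_finEquiv_mul, sub_eq_zero,
    (finEquiv N).injective.eq_iff]
  split_ifs <;> simp [NeZero.ne]

end Fourier

namespace ZMod
variable {N : ℕ} [NeZero N]

lemma dft_one (k : ZMod N) : 𝓕 (1 : ZMod N → ℂ) k = if k = 0 then (N : ℂ) else 0 := by
  simp only [dft_apply, Pi.one_apply, smul_eq_mul, mul_one, ← mul_neg]
  rw [AddChar.sum_mulShift _ (isPrimitive_stdAddChar N), ZMod.card]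
  simp only [neg_eq_zero, Nat.cast_ite, Nat.cast_zero]

lemma dft_single_zero (k : ZMod N) : 𝓕 (Pi.single 0 1 : ZMod N → ℂ) k = 1 := by
  simp [dft_apply, Pi.single_apply]

end ZMod

section QuadraticChar
variable {p : ℕ} [Fact p.Prime]

noncomputable def complexQuadraticChar (p : ℕ) [Fact p.Prime] : DirichletCharacter ℂ p :=
  (quadraticChar (ZMod p)).ringHomComp (Int.castRingHom ℂ)

lemma complexQuadraticChar_apply (a : ZMod p) :
    complexQuadraticChar p a = quadraticChar (ZMod p) a :=
  MulChar.ringHomComp_apply _ _ _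

lemma isQuadratic_complexQuadraticChar : (complexQuadraticChar p).IsQuadratic :=
  (quadraticChar_isQuadratic (ZMod p)).comp _

lemma complexQuadraticChar_ne_one (hp : p ≠ 2) : complexQuadraticChar p ≠ 1 :=
  (MulChar.ringHomComp_ne_one_iff Int.cast_injective).mpr
    (quadraticChar_ne_one (by rwa [ZMod.ringChar_zmod_n]))

lemma isPrimitive_complexQuadraticChar (hp : p ≠ 2) :
    (complexQuadraticChar p).IsPrimitive := by
  rcases (Fact.out : p.Prime).eq_one_or_self_of_dvd _
    (complexQuadraticChar p).conductor_dvd_level with h | h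
  · exact absurd (DirichletCharacter.eq_one_iff_conductor_eq_one.mpr h)
      (complexQuadraticChar_ne_one hp)
  · exact h

lemma sq_dft_complexQuadraticChar (hp4 : p % 4 = 1) {k : ZMod p} (hk : k ≠ 0) :
    𝓕 (complexQuadraticChar p) k ^ 2 = p := by
  have hp2 : p ≠ 2 := by omega
  have hchar : ringChar (ZMod p) ≠ 2 := by rwa [ZMod.ringChar_zmod_n]
  have hg : gaussSum (complexQuadraticChar p) stdAddChar ^ 2 =
      complexQuadraticChar p (-1) * Fintype.card (ZMod p) :=
    gaussSum_sq (complexQuadraticChar_ne_one hp2) isQuadratic_complexQuadraticChar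
      (isPrimitive_stdAddChar p)
  rw [(isPrimitive_complexQuadraticChar hp2).fourierTransform_eq_inv_mul_gaussSum,
    isQuadratic_complexQuadraticChar.inv, mul_pow, hg, complexQuadraticChar_apply,
    complexQuadraticChar_apply, ← Int.cast_pow, quadraticChar_sq_one (neg_ne_zero.mpr hk),
    quadraticChar_neg_one hchar, ZMod.card, ZMod.χ₄_nat_one_mod_four hp4]
  simp

end QuadraticChar

section Angle
variable {p : ℕ}

lemma cosR_eq_inv (hp : p ≠ 1) : cosR p = (Real.sqrt p + 1)⁻¹ := by
  have hs : Real.sqrt p - 1 ≠ 0 := by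
    rwa [sub_ne_zero, Ne, Real.sqrt_eq_one, Nat.cast_eq_one]
  have hp : (p : ℝ) - 1 = (Real.sqrt p - 1) * (Real.sqrt p + 1) := by
    linear_combination -Real.mul_self_sqrt (Nat.cast_nonneg (α := ℝ) p)
  rw [cosR, hp, div_mul_cancel_left₀ hs]

lemma cosR_sq_le_one (hp : p ≠ 1) : cosR p ^ 2 ≤ 1 := by
  have h : cosR p ≤ 1 :=
    cosR_eq_inv hp ▸ inv_le_one_of_one_le₀ (le_add_of_nonneg_left (Real.sqrt_nonneg _))
  nlinarith [cosR_eq_inv hp ▸ inv_nonneg.mpr (by positivity : 0 ≤ Real.sqrt p + 1)]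

lemma sinR_sq (hp : p ≠ 1) : sinR p ^ 2 = 1 - cosR p ^ 2 :=
  Real.sq_sqrt (sub_nonneg.mpr (cosR_sq_le_one hp))

lemma norm_z0 (hp : p ≠ 1) : ‖z0 p‖ = 1 := by
  rw [z0, Complex.norm_add_mul_I, sinR_sq hp, add_sub_cancel, Real.sqrt_one]

lemma sub_one_mul_cosR_add_one (hp : p ≠ 1) : ((p : ℝ) - 1) * cosR p + 1 = Real.sqrt p := by
  rw [cosR_eq_inv hp]
  have hp : (p : ℝ) = Real.sqrt p * Real.sqrt p := (Real.mul_self_sqrt (Nat.cast_nonneg _)).symm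
  have hs : 0 ≤ Real.sqrt p := Real.sqrt_nonneg _
  generalize Real.sqrt p = s at hp hs ⊢
  rw [hp]
  field_simp
  ring

lemma one_sub_cosR_sq_add_sinR_sq_mul (hp : p ≠ 1) :
    (1 - cosR p) ^ 2 + sinR p ^ 2 * p = p := by
  rw [sinR_sq hp, cosR_eq_inv hp]
  have hp : (p : ℝ) = Real.sqrt p * Real.sqrt p := (Real.mul_self_sqrt (Nat.cast_nonneg _)).symm
  have hs : 0 ≤ Real.sqrt p := Real.sqrt_nonneg _
  generalize Real.sqrt p = s at hp hs ⊢
  rw [hp]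
  field_simp
  ring

end Angle

section VStar
variable {p : ℕ}

lemma mem_QresStar_iff {m : ℕ} :
    m ∈ QresStar p ↔ m < p ∧ (m : ZMod p) ≠ 0 ∧ IsSquare (m : ZMod p) := by
  simp only [QresStar, mem_filter, mem_range, ← Int.cast_natCast (R := ZMod p),
    ← ZMod.intCast_zmod_eq_zero_iff_dvd, ← ZMod.intCast_eq_intCast_iff]
  refine and_congr_right' (and_congr_right'
    ⟨fun ⟨x, hx⟩ => ⟨x, by rw [← hx]; push_cast; ring⟩, ?_⟩)
  rintro ⟨y, hy⟩
  obtain ⟨x, rfl⟩ := ZMod.intCast_surjective y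
  exact ⟨x, by rw [hy]; push_cast; ring⟩

lemma vStar_apply [NeZero p] (m : Fin p) :
    vStar p m = if finEquiv p m = 0 then 1
      else if IsSquare (finEquiv p m) then z0 p else conj (z0 p) := by
  have hzero : (m : ℕ) = 0 ↔ finEquiv p m = 0 := by
    rw [finEquiv_apply, ZMod.natCast_eq_zero_iff, Nat.dvd_iff_mod_eq_zero,
      Nat.mod_eq_of_lt m.isLt]
  simp only [vStar, WithLp.ofLp_toLp, hzero, mem_QresStar_iff, m.isLt, true_and,
    ← finEquiv_apply]
  split_ifs <;> simp_all

lemma norm_vStar_apply (hp : p ≠ 1) (m : Fin p) : ‖vStar p m‖ = 1 := by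
  simp only [vStar]
  split_ifs <;> simp [norm_z0 hp]

variable [Fact p.Prime]

lemma vStar_comp_finEquiv_symm :
    (fun a => vStar p ((finEquiv p).symm a)) =
      (cosR p : ℂ) • (1 : ZMod p → ℂ) + (sinR p * Complex.I : ℂ) • ⇑(complexQuadraticChar p) +
        (1 - cosR p : ℂ) • Pi.single 0 1 := by
  funext a
  simp only [vStar_apply, RingEquiv.apply_symm_apply, Pi.add_apply, Pi.smul_apply, smul_eq_mul,
    Pi.one_apply, complexQuadraticChar_apply, quadraticChar_apply, quadraticCharFun,
    Pi.single_apply, z0]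
  split_ifs <;> simp [Complex.conj_ofReal]

lemma sq_norm_dft_vStar (hp4 : p % 4 = 1) (k : ZMod p) :
    ‖𝓕 (fun a => vStar p ((finEquiv p).symm a)) k‖ ^ 2 = p := by
  have hp1 : p ≠ 1 := (Fact.out : p.Prime).ne_one
  rw [vStar_comp_finEquiv_symm]
  simp only [LinearEquiv.map_add, LinearEquiv.map_smul, Pi.add_apply, Pi.smul_apply,
    smul_eq_mul, dft_one, dft_single_zero, mul_one]
  by_cases hk : k = 0
  · have hχ : 𝓕 (complexQuadraticChar p) 0 = 0 := by
      rw [dft_apply_zero]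
      exact MulChar.sum_eq_zero_of_ne_one (complexQuadraticChar_ne_one (by omega))
    have h : (cosR p : ℂ) * p + 1 - cosR p = Real.sqrt p := by
      rw [← sub_one_mul_cosR_add_one hp1]
      push_cast
      ring
    rw [hk, hχ, if_pos rfl, mul_zero, add_zero, ← add_sub_assoc, h, Complex.norm_real,
      Real.norm_eq_abs, sq_abs, Real.sq_sqrt (Nat.cast_nonneg _)]
  · obtain ⟨t, ht, htsq⟩ : ∃ t : ℝ, 𝓕 (complexQuadraticChar p) k = t ∧ t ^ 2 = p := by
      have hsq : 𝓕 (complexQuadraticChar p) k ^ 2 = (Real.sqrt p : ℂ) ^ 2 := by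
        rw [sq_dft_complexQuadraticChar hp4 hk, ← Complex.ofReal_pow,
          Real.sq_sqrt (Nat.cast_nonneg _), Complex.ofReal_natCast]
      rcases sq_eq_sq_iff_eq_or_eq_neg.mp hsq with h | h
      · exact ⟨_, h, Real.sq_sqrt (Nat.cast_nonneg _)⟩
      · exact ⟨-Real.sqrt p, by rw [h, Complex.ofReal_neg],
          by rw [neg_sq, Real.sq_sqrt (Nat.cast_nonneg _)]⟩
    have h : (cosR p : ℂ) * 0 + sinR p * Complex.I * t + (1 - cosR p) =
        ((1 - cosR p : ℝ) : ℂ) + ((sinR p * t : ℝ) : ℂ) * Complex.I := by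
      push_cast
      ring
    rw [if_neg hk, ht, h, Complex.sq_norm, Complex.normSq_add_mul_I, mul_pow, htsq,
      one_sub_cosR_sq_add_sinR_sq_mul hp1]

end VStar

theorem stmt_9 (p : ℕ) (hp : p.Prime) (hp4 : p % 4 = 1) :
    ∃ B : OrthonormalBasis (Fin p) ℂ (EuclideanSpace ℂ (Fin p)),
      (∀ k : Fin p, B k = ((Real.sqrt p : ℂ))⁻¹ • cyclicShift k (vStar p)) ∧
      (∀ j k : Fin p,
        ‖⟪EuclideanSpace.single j (1 : ℂ), B k⟫‖ ^ 2 = 1 / p) ∧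
      (∀ j k : Fin p, ‖⟪fourierVec p j, B k⟫‖ ^ 2 = 1 / p) := by
  have : Fact p.Prime := ⟨hp⟩
  set v := ((Real.sqrt p : ℂ))⁻¹ • vStar p
  have hv : ∀ j, ‖⟪fourierVec p j, v⟫‖ ^ 2 = 1 / p := fun j => by
    rw [inner_smul_right, inner_fourierVec_eq_dft, sq_norm_inv_sqrt_mul, sq_norm_inv_sqrt_mul,
      sq_norm_dft_vStar hp4]
    field_simp [hp.ne_zero]
  refine ⟨(orthonormal_cyclicShift hv).toEuclideanBasis, fun k => ?_, fun j k => ?_,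
    fun j k => ?_⟩
  · rw [Orthonormal.coe_toEuclideanBasis, cyclicShift_smul]
  · rw [Orthonormal.coe_toEuclideanBasis, inner_single_cyclicShift, PiLp.smul_apply, smul_eq_mul,
      sq_norm_inv_sqrt_mul, norm_vStar_apply hp.ne_one, one_pow]
  · rw [Orthonormal.coe_toEuclideanBasis, norm_inner_fourierVec_cyclicShift, hv]
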